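/- arXiv:2312.14334 — 2 statements merged into one kernel-verified Lean document; each statement's English description precedes it below -/
import Mathlib

section
/- For any a > 0 and any real λ with 0 ≤ λ < 1/(2a), the inequality exp(-λa)/√(1 - 2λa) ≤ exp(λ²(2a)²/2) holds for all |λ| ≤ 1/(4a). -/
open Real

/-- For `a > 0` and `0 ≤ λ < 1/(2a)` with `|λ| ≤ 1/(4a)`,
`exp(-λ a) / √(1 - 2 λ a) ≤ exp(λ² (2a)² / 2)`. -/
theorem exp_div_sqrt_le_subexponential_bound (a : ℝ) (ha : 0 < a) (l : ℝ)
    (hl0 : 0 ≤ l) (hl1 : l < 1 / (2 * a)) (hl2 : |l| ≤ 1 / (4 * a)) :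
    Real.exp (-l * a) / Real.sqrt (1 - 2 * l * a) ≤
      Real.exp (l ^ 2 * (2 * a) ^ 2 / 2) := by
  set x : ℝ := 2 * l * a with hx
  have hx0 : 0 ≤ x := by positivity
  rw [abs_of_nonneg hl0] at hl2
  have hxhalf : x ≤ 1 / 2 := by
    have h := mul_le_mul_of_nonneg_right hl2 ha.le
    have h4 : 1 / (4 * a) * a = 1 / 4 := by field_simp
    rw [h4] at h
    rw [hx]; nlinarith
  have hx1 : 1 - x > 0 := by linarith
  -- key : 1 ≤ (1 - x) * exp (x + x^2)
  have hquad := Real.quadratic_le_exp_of_nonneg (x := x + x ^ 2) (by positivity)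
  have hkey : 1 ≤ (1 - x) * Real.exp (x + x ^ 2) := by
    have h1 : 1 ≤ (1 - x) * (1 + (x + x ^ 2) + (x + x ^ 2) ^ 2 / 2) := by nlinarith
    calc 1 ≤ (1 - x) * (1 + (x + x ^ 2) + (x + x ^ 2) ^ 2 / 2) := h1
      _ ≤ (1 - x) * Real.exp (x + x ^ 2) :=
          mul_le_mul_of_nonneg_left hquad (by linarith)
  have hexp : Real.exp (-(x + x ^ 2)) ≤ 1 - x := by
    rw [Real.exp_neg]
    rw [inv_le_iff_one_le_mul₀ (Real.exp_pos _)] at *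
    linarith [hkey]
  have hsqrt : Real.exp (-(x + x ^ 2) / 2) ≤ Real.sqrt (1 - x) := by
    rw [Real.exp_half]
    exact Real.sqrt_le_sqrt hexp
  -- goal rearranged
  have hgoal : Real.exp (-x / 2) ≤ Real.exp (x ^ 2 / 2) * Real.sqrt (1 - x) := by
    have : Real.exp (-x / 2) = Real.exp (x ^ 2 / 2) * Real.exp (-(x + x ^ 2) / 2) := by
      rw [← Real.exp_add]; ring_nf
    rw [this]
    exact mul_le_mul_of_nonneg_left hsqrt (Real.exp_pos _).le
  have hs : 0 < Real.sqrt (1 - x) := Real.sqrt_pos.mpr hx1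
  have e1 : -l * a = -x / 2 := by rw [hx]; ring
  have e2 : l ^ 2 * (2 * a) ^ 2 / 2 = x ^ 2 / 2 := by rw [hx]; ring
  rw [e1, e2, div_le_iff₀ hs]
  exact hgoal
end

section
/- For β₂ ∈ (0,1) and positive reals a₁,...,a_T with bₜ = Σ_{j=1}^t β₂^{t-j} aⱼ and ε > 0, the sum Σ_{t=1}^T aₜ/(bₜ + ε) ≤ ln(1 + b_T/ε) - T·ln(β₂). -/
/-!
Writing `bₜ = β₂ bₜ₋₁ + aₜ`, the inequality `log z ≥ 1 - 1/z` gives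
`aₜ / (bₜ + ε) ≤ log (bₜ + ε) - log (β₂ bₜ₋₁ + ε)`, and `β₂ bₜ₋₁ + ε ≥ β₂ (bₜ₋₁ + ε)` turns the
right-hand side into `log (bₜ + ε) - log (bₜ₋₁ + ε) - log β₂`. Summing telescopes, with `b₀ = 0`.
-/

open Real Finset

lemma div_le_log_sub_log {x y : ℝ} (hy : 0 < y) (hyx : 0 < y - x) :
    x / y ≤ log y - log (y - x) := by
  have h := one_sub_inv_le_log_of_pos (div_pos hy hyx)
  rwa [inv_div, log_div hy.ne' hyx.ne', one_sub_div hy.ne', sub_sub_cancel] at h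

lemma div_le_log_sub_log_sub_log {β b x ε : ℝ} (hβ₀ : 0 < β) (hβ₁ : β ≤ 1) (hε : 0 ≤ ε)
    (hb : 0 < b + ε) (hb' : 0 < β * b + x + ε) :
    x / (β * b + x + ε) ≤ log (β * b + x + ε) - log (b + ε) - log β := by
  have hdecay : β * (b + ε) ≤ β * b + ε := by nlinarith
  have hpos : 0 < β * b + ε := (mul_pos hβ₀ hb).trans_le hdecay
  have hstep := div_le_log_sub_log hb' (x := x) (by linarith)
  have hlog : log β + log (b + ε) ≤ log (β * b + ε) := by
    rw [← log_mul hβ₀.ne' hb.ne']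
    exact log_le_log (mul_pos hβ₀ hb) hdecay
  rw [show β * b + x + ε - x = β * b + ε by ring] at hstep
  linarith

lemma sum_div_le_log_sub_log_sub_mul_log {β ε : ℝ} (hβ₀ : 0 < β) (hβ₁ : β ≤ 1) (hε : 0 < ε)
    (a b : ℕ → ℝ) (hb₀ : b 0 = 0) (hb : ∀ t, b (t + 1) = β * b t + a (t + 1)) (T : ℕ)
    (hpos : ∀ t ≤ T, 0 < b t + ε) :
    ∑ t ∈ Icc 1 T, a t / (b t + ε) ≤ log (b T + ε) - log ε - T * log β := by
  induction T with
  | zero => simp [hb₀]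
  | succ n ih =>
    have hstep := div_le_log_sub_log_sub_log (x := a (n + 1)) hβ₀ hβ₁ hε.le (hpos n (by omega))
      (hb n ▸ hpos (n + 1) le_rfl)
    rw [sum_Icc_succ_top (by omega), hb n]
    push_cast
    linarith [ih fun t ht => hpos t (by omega)]

def discountedSum (β : ℝ) (a : ℕ → ℝ) (t : ℕ) : ℝ :=
  ∑ j ∈ Icc 1 t, β ^ (t - j) * a j

lemma discountedSum_zero (β : ℝ) (a : ℕ → ℝ) : discountedSum β a 0 = 0 := by
  simp [discountedSum]

lemma discountedSum_succ (β : ℝ) (a : ℕ → ℝ) (t : ℕ) :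
    discountedSum β a (t + 1) = β * discountedSum β a t + a (t + 1) := by
  rw [discountedSum, discountedSum, sum_Icc_succ_top (by omega), mul_sum, Nat.sub_self, pow_zero,
    one_mul]
  congr 1
  refine sum_congr rfl fun j hj => ?_
  rw [Nat.sub_add_comm (mem_Icc.mp hj).2, pow_succ]
  ring

lemma discountedSum_nonneg {β : ℝ} (hβ : 0 ≤ β) {a : ℕ → ℝ} {t : ℕ}
    (ha : ∀ j, 1 ≤ j → j ≤ t → 0 ≤ a j) : 0 ≤ discountedSum β a t :=
  sum_nonneg fun j hj => mul_nonneg (pow_nonneg hβ _) (ha j (mem_Icc.mp hj).1 (mem_Icc.mp hj).2)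

/-- Standard Adam-analysis lemma (Défossez et al.). For `β₂ ∈ (0,1)`,
`ε > 0` and positive `a₁, …, a_T`, with `bₜ = ∑_{j=1}^t β₂^{t-j} aⱼ`, we have
`∑_{t=1}^T aₜ/(bₜ + ε) ≤ ln(1 + b_T/ε) - T ln β₂`. -/
theorem adam_log_sum_bound (β₂ ε : ℝ) (hβ₂ : β₂ ∈ Set.Ioo (0 : ℝ) 1) (hε : 0 < ε)
    (T : ℕ) (a : ℕ → ℝ) (ha : ∀ t, 1 ≤ t → t ≤ T → 0 < a t) :
    ∑ t ∈ Finset.Icc 1 T,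
        a t / ((∑ j ∈ Finset.Icc 1 t, β₂ ^ (t - j) * a j) + ε) ≤
      Real.log (1 + (∑ j ∈ Finset.Icc 1 T, β₂ ^ (T - j) * a j) / ε) -
        T * Real.log β₂ := by
  obtain ⟨hβ₀, hβ₁⟩ := hβ₂
  have hnonneg : ∀ t ≤ T, 0 ≤ discountedSum β₂ a t := fun t ht =>
    discountedSum_nonneg hβ₀.le fun j hj₁ hjt => (ha j hj₁ (hjt.trans ht)).le
  have hlog : log (1 + discountedSum β₂ a T / ε) = log (discountedSum β₂ a T + ε) - log ε := by
    rw [← log_div (by linarith [hnonneg T le_rfl]) hε.ne', add_div, div_self hε.ne', add_comm]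
  change ∑ t ∈ Icc 1 T, a t / (discountedSum β₂ a t + ε) ≤
    log (1 + discountedSum β₂ a T / ε) - T * log β₂
  rw [hlog]
  exact sum_div_le_log_sub_log_sub_mul_log hβ₀ hβ₁.le hε a _ (discountedSum_zero β₂ a)
    (discountedSum_succ β₂ a) T fun t ht => by linarith [hnonneg t ht]
end
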